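/- arXiv:math/0409449 — 2 statements merged into one kernel-verified Lean document; each statement's English description precedes it below -/
import Mathlib

section
/- Let G ≤ Sym(Ω) be a transitive finite permutation group with E a transitive, normal, G-invariant Cartesian decomposition of Ω such that for each Γ ∈ E the component G^Γ is quasiprimitive, and suppose that for some (equivalently, all) Γ ∈ E, the component G^Γ has a unique minimal normal subgroup. Then E is a blow-up decomposition for G. -/
open scoped Pointwise

namespace QP

variable {Ω : Type*}

/-- `P` is a partition of `Ω`. -/
def IsPartition (P : Set (Set Ω)) : Prop :=
  ∅ ∉ P ∧ ∀ ω : Ω, ∃! b : Set Ω, b ∈ P ∧ ω ∈ b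

/-- A proper partition: neither `{Ω}` nor the partition into singletons. -/
def IsProperPartition (P : Set (Set Ω)) : Prop :=
  IsPartition P ∧ P ≠ {Set.univ} ∧ ¬ ∀ b ∈ P, ∃ ω : Ω, b = {ω}

/-- The pointwise stabiliser of the partition `P` (kernel of the action on `P`),
as a subgroup of `Sym(Ω)`: the permutations fixing every block of `P` setwise. -/
def partKernel (P : Set (Set Ω)) : Subgroup (Equiv.Perm Ω) where
  carrier := {g | ∀ b ∈ P, g • b = b}
  one_mem' := by intro b hb; simp
  mul_mem' := by
    intro g h hg hh b hb
    rw [mul_smul, hh b hb, hg b hb]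
  inv_mem' := by
    intro g hg b hb
    rw [inv_smul_eq_iff, hg b hb]

/-- The setwise stabiliser of a partition `P` in `Sym(Ω)`. -/
def partStab (P : Set (Set Ω)) : Subgroup (Equiv.Perm Ω) :=
  MulAction.stabilizer (Equiv.Perm Ω) P

/-- The permutation of the set of blocks of `P` induced by an element of
the stabiliser of `P`. -/
noncomputable def blockPerm (P : Set (Set Ω)) (g : ↥(partStab P)) : Equiv.Perm ↥P where
  toFun b := ⟨(g : Equiv.Perm Ω) • (b : Set Ω), by
    have h1 : (g : Equiv.Perm Ω) • (b : Set Ω) ∈ (g : Equiv.Perm Ω) • P :=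
      Set.smul_mem_smul_set b.2
    rwa [g.2] at h1⟩
  invFun b := ⟨(g : Equiv.Perm Ω)⁻¹ • (b : Set Ω), by
    have h0 : (g : Equiv.Perm Ω) • P = P := g.2
    have h2 : ((g : Equiv.Perm Ω)⁻¹) • P = P := by
      rw [inv_smul_eq_iff, h0]
    have h1 : (g : Equiv.Perm Ω)⁻¹ • (b : Set Ω) ∈ (g : Equiv.Perm Ω)⁻¹ • P :=
      Set.smul_mem_smul_set b.2
    rwa [h2] at h1⟩
  left_inv b := by
    apply Subtype.ext
    simp
  right_inv b := by
    apply Subtype.ext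
    simp

/-- The homomorphism from the stabiliser of a partition `P` to the symmetric
group on the set of blocks of `P`. -/
noncomputable def componentHom (P : Set (Set Ω)) : ↥(partStab P) →* Equiv.Perm ↥P where
  toFun := blockPerm P
  map_one' := by
    apply Equiv.ext; intro b
    apply Subtype.ext
    simp [blockPerm]
  map_mul' := by
    intro g h
    apply Equiv.ext; intro b
    apply Subtype.ext
    simp [blockPerm, mul_smul]

/-- The component `G^P` of `G` on a partition `P` : the permutation group
induced on the set of blocks of `P` by the setwise stabiliser of `P` in `G`. -/
noncomputable def component (G : Subgroup (Equiv.Perm Ω)) (P : Set (Set Ω)) :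
    Subgroup (Equiv.Perm ↥P) :=
  Subgroup.map (componentHom P) (G.subgroupOf (partStab P))

section abstr
variable {X : Type*} [Group X]

/-- `N` is a normal subgroup of the (sub)group `G`. -/
def IsNormalIn (N G : Subgroup X) : Prop :=
  N ≤ G ∧ ∀ g ∈ G, ∀ n ∈ N, g * n * g⁻¹ ∈ N

/-- `N` is a minimal normal subgroup of `G`. -/
def IsMinimalNormalIn (N G : Subgroup X) : Prop :=
  IsNormalIn N G ∧ N ≠ ⊥ ∧
    ∀ K : Subgroup X, IsNormalIn K G → K ≠ ⊥ → K ≤ N → K = N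

/-- The socle of `G`: the subgroup generated by all minimal normal subgroups. -/
def socle (G : Subgroup X) : Subgroup X :=
  ⨆ N ∈ {N : Subgroup X | IsMinimalNormalIn N G}, N

/-- `M` is the internal direct product of the family `N` of subgroups. -/
def IsInternalDirectProductOver {ι : Type*} (M : Subgroup X) (N : ι → Subgroup X) : Prop :=
  (∀ i, N i ≤ M) ∧
  (∀ i j, i ≠ j → ∀ x ∈ N i, ∀ y ∈ N j, Commute x y) ∧
  (⨆ i, N i) = M ∧
  (∀ i, N i ⊓ (⨆ j ∈ ({i}ᶜ : Set ι), N j) = ⊥)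

end abstr

/-- A transitive permutation group on `α`. -/
def IsTransitivePerm {α : Type*} (H : Subgroup (Equiv.Perm α)) : Prop :=
  ∀ a b : α, ∃ g ∈ H, g a = b

/-- A regular permutation group: transitive with trivial point stabilisers. -/
def IsRegularPerm {α : Type*} (H : Subgroup (Equiv.Perm α)) : Prop :=
  IsTransitivePerm H ∧ ∀ g ∈ H, ∀ a : α, g a = a → g = 1

/-- A semiregular permutation group: all point stabilisers are trivial. -/
def IsSemiregularPerm {α : Type*} (H : Subgroup (Equiv.Perm α)) : Prop :=
  ∀ g ∈ H, ∀ a : α, g a = a → g = 1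

/-- A quasiprimitive permutation group: transitive, and every nontrivial
normal subgroup is transitive. -/
def IsQuasiprimitivePerm {α : Type*} (H : Subgroup (Equiv.Perm α)) : Prop :=
  IsTransitivePerm H ∧
    ∀ N : Subgroup (Equiv.Perm α), IsNormalIn N H → N ≠ ⊥ → IsTransitivePerm N

section indexed

variable {ι : Type*}

/-- A Cartesian decomposition, indexed form: a family of pairwise distinct
proper partitions such that any choice of blocks, one from each partition,
intersects in exactly one point. -/
def IsCartesianDecomp (Γ : ι → Set (Set Ω)) : Prop :=
  (∀ i, IsProperPartition (Γ i)) ∧ Function.Injective Γ ∧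
  ∀ c : ι → Set Ω, (∀ i, c i ∈ Γ i) → ∃! ω : Ω, ∀ i, ω ∈ c i

/-- The Cartesian decomposition `Γ` is `M`-normal, with `N i` playing the
role of `M^{Γ i}`: each partition is `M`-invariant, `M` is the internal direct
product of the `N i`, each `N i` acts faithfully on `Γ i`, and
`∏_{j ≠ i} N j` is the kernel of the `M`-action on `Γ i`. -/
structure IsNormalDecomp (M : Subgroup (Equiv.Perm Ω)) (Γ : ι → Set (Set Ω))
    (N : ι → Subgroup (Equiv.Perm Ω)) : Prop where
  invariant : ∀ i, ∀ g ∈ M, ∀ b ∈ Γ i, g • b ∈ Γ i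
  product : IsInternalDirectProductOver M N
  faithful : ∀ i, N i ⊓ partKernel (Γ i) = ⊥
  kernel : ∀ i, M ⊓ partKernel (Γ i) = ⨆ j ∈ ({i}ᶜ : Set ι), N j

end indexed

section setbased

/-- A Cartesian decomposition, as a (finite) set of proper partitions. -/
def IsCartesianDecompSet (E : Set (Set (Set Ω))) : Prop :=
  E.Finite ∧ (∀ P ∈ E, IsProperPartition P) ∧
  ∀ c : Set (Set Ω) → Set Ω, (∀ P ∈ E, c P ∈ P) → ∃! ω : Ω, ∀ P ∈ E, ω ∈ c P

/-- `E` is a homogeneous Cartesian decomposition: all partitions have the same size. -/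
def IsHomogeneous (E : Set (Set (Set Ω))) : Prop :=
  ∀ P ∈ E, ∀ Q ∈ E, Nat.card ↥P = Nat.card ↥Q

/-- `E` is invariant under `G`: `G` permutes the partitions in `E`. -/
def InvariantDec (G : Subgroup (Equiv.Perm Ω)) (E : Set (Set (Set Ω))) : Prop :=
  ∀ g ∈ G, ∀ P ∈ E, g • P ∈ E

/-- `G` is transitive on `E`. -/
def TransitiveOnDec (G : Subgroup (Equiv.Perm Ω)) (E : Set (Set (Set Ω))) : Prop :=
  ∀ P ∈ E, ∀ Q ∈ E, ∃ g ∈ G, g • P = Q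

/-- The Cartesian decomposition `E` is `M`-normal: `M` fixes each partition
in `E` setwise, and `M` is the internal direct product of subgroups `N P`
(`P ∈ E`), where `∏_{Q ≠ P} N Q` is the kernel of the `M`-action on `P`. -/
def IsNormalDecompSet (M : Subgroup (Equiv.Perm Ω)) (E : Set (Set (Set Ω))) : Prop :=
  (∀ g ∈ M, ∀ P ∈ E, g • P = P) ∧
  ∃ N : Set (Set Ω) → Subgroup (Equiv.Perm Ω),
    (∀ P ∈ E, N P ≤ M) ∧
    (∀ P Q, P ∈ E → Q ∈ E → P ≠ Q → ∀ x ∈ N P, ∀ y ∈ N Q, Commute x y) ∧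
    (⨆ P ∈ E, N P) = M ∧
    (∀ P ∈ E, N P ⊓ (⨆ Q ∈ E \ {P}, N Q) = ⊥) ∧
    (∀ P ∈ E, M ⊓ partKernel P = ⨆ Q ∈ E \ {P}, N Q)

/-- `E` is a blow-up decomposition for `G`: a `G`-invariant Cartesian
decomposition on which `G` acts transitively, which is `M`-normal for some
transitive normal subgroup `M` of `G` such that `M^Γ = Soc(G^Γ)` for every
`Γ ∈ E`. -/
def IsBlowUpDecomp (G : Subgroup (Equiv.Perm Ω)) (E : Set (Set (Set Ω))) : Prop :=
  IsCartesianDecompSet E ∧ InvariantDec G E ∧ TransitiveOnDec G E ∧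
  ∃ M : Subgroup (Equiv.Perm Ω), IsNormalIn M G ∧ IsTransitivePerm M ∧
    IsNormalDecompSet M E ∧ ∀ P ∈ E, component M P = socle (component G P)

end setbased

end QP

namespace QP
variable {Ω : Type*}

lemma mem_partKernel {P : Set (Set Ω)} {g : Equiv.Perm Ω} :
    g ∈ partKernel P ↔ ∀ b ∈ P, g • b = b := Iff.rfl

lemma mem_partStab {P : Set (Set Ω)} {g : Equiv.Perm Ω} :
    g ∈ partStab P ↔ g • P = P := Iff.rfl

lemma partKernel_le_partStab (P : Set (Set Ω)) : partKernel P ≤ partStab P := by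
  intro g hg
  rw [mem_partStab]
  apply Set.Subset.antisymm
  · rintro b ⟨b', hb', rfl⟩
    show g • b' ∈ P
    rwa [hg b' hb']
  · intro b hb
    exact ⟨b, hb, hg b hb⟩

lemma smul_block_mem {P : Set (Set Ω)} {g : Equiv.Perm Ω} (hg : g ∈ partStab P)
    {b : Set Ω} (hb : b ∈ P) : g • b ∈ P := by
  have : g • b ∈ g • P := Set.smul_mem_smul_set hb
  rwa [hg] at this

lemma componentHom_apply {P : Set (Set Ω)} (g : ↥(partStab P)) (b : ↥P) :
    (((componentHom P g) b : ↥P) : Set Ω) = (g : Equiv.Perm Ω) • (b : Set Ω) := rfl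

lemma mem_component {H : Subgroup (Equiv.Perm Ω)} {P : Set (Set Ω)}
    {σ : Equiv.Perm ↥P} :
    σ ∈ component H P ↔ ∃ g : ↥(partStab P), (g : Equiv.Perm Ω) ∈ H ∧ componentHom P g = σ := by
  simp [component, Subgroup.mem_map, Subgroup.mem_subgroupOf]

/-- Conjugation maps `partKernel P` to `partKernel (g • P)`. -/
lemma map_conj_partKernel (g : Equiv.Perm Ω) (P : Set (Set Ω)) :
    Subgroup.map (MulAut.conj g).toMonoidHom (partKernel P) = partKernel (g • P) := by
  ext x
  constructor
  · rintro ⟨h, hh, rfl⟩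
    rintro b ⟨b₀, hb₀, rfl⟩
    show (MulAut.conj g h) • (g • b₀) = g • b₀
    rw [MulAut.conj_apply, ← mul_smul, show g * h * g⁻¹ * g = g * h by group,
      mul_smul, hh b₀ hb₀]
  · intro hx
    refine ⟨g⁻¹ * x * g, ?_, show g * (g⁻¹ * x * g) * g⁻¹ = x by group⟩
    intro b hb
    have h1 : g • b ∈ g • P := Set.smul_mem_smul_set hb
    rw [mul_smul, mul_smul, hx _ h1, inv_smul_smul]

lemma map_conj_partStab (g : Equiv.Perm Ω) (P : Set (Set Ω)) :
    Subgroup.map (MulAut.conj g).toMonoidHom (partStab P) = partStab (g • P) := by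
  ext x
  constructor
  · rintro ⟨h, hh, rfl⟩
    show (MulAut.conj g h) • (g • P) = g • P
    rw [MulAut.conj_apply, ← mul_smul, show g * h * g⁻¹ * g = g * h by group,
      mul_smul, mem_partStab.mp hh]
  · intro hx
    refine ⟨g⁻¹ * x * g, ?_, show g * (g⁻¹ * x * g) * g⁻¹ = x by group⟩
    show g⁻¹ * x * g ∈ partStab P
    rw [mem_partStab, mul_smul, mul_smul, mem_partStab.mp hx, inv_smul_smul]


/-- An equivalence of types induces a `MulEquiv` of permutation groups. -/
def permMulEquiv {α β : Type*} (e : α ≃ β) : Equiv.Perm α ≃* Equiv.Perm β :=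
  { Equiv.permCongr e with
    map_mul' := fun p q => by
      ext b
      simp [Equiv.permCongr_apply, Equiv.Perm.mul_apply] }

lemma permMulEquiv_apply {α β : Type*} (e : α ≃ β) (p : Equiv.Perm α) (b : β) :
    permMulEquiv e p b = e (p (e.symm b)) := rfl

/-- The bijection between blocks of `P` and blocks of `g • P`. -/
noncomputable def blockEquiv (g : Equiv.Perm Ω) (P : Set (Set Ω)) : ↥P ≃ ↥(g • P) where
  toFun b := ⟨g • (b : Set Ω), Set.smul_mem_smul_set b.2⟩
  invFun b := ⟨g⁻¹ • (b : Set Ω), by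
    obtain ⟨b₀, hb₀, he⟩ := b.2
    rw [← he, inv_smul_smul]; exact hb₀⟩
  left_inv b := by apply Subtype.ext; simp
  right_inv b := by apply Subtype.ext; simp

lemma componentHom_conj (g : Equiv.Perm Ω) (P : Set (Set Ω)) (x : Equiv.Perm Ω)
    (hx : x ∈ partStab P) (hx' : g * x * g⁻¹ ∈ partStab (g • P)) :
    componentHom (g • P) ⟨g * x * g⁻¹, hx'⟩ =
      (permMulEquiv (blockEquiv g P)) (componentHom P ⟨x, hx⟩) := by
  apply Equiv.ext; intro b
  apply Subtype.ext
  show (g * x * g⁻¹) • (b : Set Ω) = _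
  rw [show ((permMulEquiv (blockEquiv g P)) (componentHom P ⟨x, hx⟩) b : Set Ω)
      = g • (x • (g⁻¹ • (b : Set Ω))) from rfl]
  rw [mul_smul, mul_smul]

lemma component_map_conj (g : Equiv.Perm Ω) (P : Set (Set Ω))
    (H : Subgroup (Equiv.Perm Ω)) :
    component (Subgroup.map (MulAut.conj g).toMonoidHom H) (g • P)
      = Subgroup.map (permMulEquiv (blockEquiv g P)).toMonoidHom (component H P) := by
  ext σ
  rw [mem_component]
  constructor
  · rintro ⟨y, hyH, rfl⟩
    obtain ⟨h, hhH, hhy⟩ := hyH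
    have hhy' : g * h * g⁻¹ = (y : Equiv.Perm Ω) := hhy
    have hy2 : (y : Equiv.Perm Ω) • (g • P) = g • P := mem_partStab.mp y.2
    have hhP : h ∈ partStab P := by
      rw [mem_partStab, show h = g⁻¹ * (y : Equiv.Perm Ω) * g by rw [← hhy']; group,
        mul_smul, mul_smul, hy2, inv_smul_smul]
    have hy' : g * h * g⁻¹ ∈ partStab (g • P) := by rw [hhy']; exact y.2
    have hyeq : y = (⟨g * h * g⁻¹, hy'⟩ : ↥(partStab (g • P))) := by
      apply Subtype.ext; rw [← hhy']
    rw [hyeq, componentHom_conj g P h hhP hy']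
    exact ⟨componentHom P ⟨h, hhP⟩, mem_component.mpr ⟨⟨h, hhP⟩, hhH, rfl⟩, rfl⟩
  · rintro ⟨τ, hτ, rfl⟩
    obtain ⟨x, hxH, rfl⟩ := mem_component.mp hτ
    have hx' : g * (x : Equiv.Perm Ω) * g⁻¹ ∈ partStab (g • P) := by
      rw [← map_conj_partStab]
      exact ⟨x, x.2, rfl⟩
    refine ⟨⟨g * (x : Equiv.Perm Ω) * g⁻¹, hx'⟩, ⟨x, hxH, rfl⟩, ?_⟩
    exact componentHom_conj g P x x.2 hx'


lemma component_mono {H H' : Subgroup (Equiv.Perm Ω)} (h : H ≤ H') (P : Set (Set Ω)) :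
    component H P ≤ component H' P :=
  Subgroup.map_mono (fun x hx => by
    rw [Subgroup.mem_subgroupOf] at *
    exact h hx)

lemma mem_map_subtype_comap {P : Set (Set Ω)} {S : Subgroup (Equiv.Perm ↥P)}
    {x : Equiv.Perm Ω} :
    x ∈ Subgroup.map (partStab P).subtype (Subgroup.comap (componentHom P) S)
      ↔ ∃ hx : x ∈ partStab P, componentHom P ⟨x, hx⟩ ∈ S := by
  constructor
  · rintro ⟨y, hy, rfl⟩
    exact ⟨y.2, hy⟩
  · rintro ⟨hx, hs⟩
    exact ⟨⟨x, hx⟩, hs, rfl⟩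

end QP

namespace QP
variable {X : Type*} [Group X]
variable {Y : Type*} [Group Y]

lemma sup_split {A B : Subgroup X} (hc : ∀ a ∈ A, ∀ b ∈ B, Commute a b) :
    ∀ x ∈ A ⊔ B, ∃ a ∈ A, ∃ b ∈ B, x = a * b := by
  intro x hx
  rw [Subgroup.sup_eq_closure] at hx
  induction hx using Subgroup.closure_induction with
  | mem x hx =>
    rcases hx with hx | hx
    · exact ⟨x, hx, 1, one_mem _, (mul_one x).symm⟩
    · exact ⟨1, one_mem _, x, hx, (one_mul x).symm⟩
  | one => exact ⟨1, one_mem _, 1, one_mem _, (one_mul 1).symm⟩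
  | mul x y hx hy ihx ihy =>
    obtain ⟨a1, ha1, b1, hb1, rfl⟩ := ihx
    obtain ⟨a2, ha2, b2, hb2, rfl⟩ := ihy
    refine ⟨a1 * a2, mul_mem ha1 ha2, b1 * b2, mul_mem hb1 hb2, ?_⟩
    have h := (hc a2 ha2 b1 hb1).eq
    calc a1 * b1 * (a2 * b2) = a1 * (b1 * a2) * b2 := by group
    _ = a1 * (a2 * b1) * b2 := by rw [← h]
    _ = a1 * a2 * (b1 * b2) := by group
  | inv x hx ih =>
    obtain ⟨a, ha, b, hb, rfl⟩ := ih
    refine ⟨a⁻¹, inv_mem ha, b⁻¹, inv_mem hb, ?_⟩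
    rw [mul_inv_rev, ((hc a ha b hb).inv_inv).eq]

lemma commute_biSup {ι : Type*} {s : Set ι} {N : ι → Subgroup X} {a : X}
    (h : ∀ i ∈ s, ∀ b ∈ N i, Commute a b) : ∀ x ∈ ⨆ i ∈ s, N i, Commute a x := by
  intro x hx
  have hle : (⨆ i ∈ s, N i) ≤ Subgroup.centralizer {a} := by
    refine iSup_le fun i => iSup_le fun hi b hb => ?_
    rw [Subgroup.mem_centralizer_iff]
    rintro y rfl
    exact (h i hi b hb).eq
  have := hle hx
  rw [Subgroup.mem_centralizer_iff] at this
  exact (this a rfl)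

lemma biSup_split {ι : Type*} {s : Set ι} {N : ι → Subgroup X} {i : ι} (hi : i ∈ s) :
    (⨆ j ∈ s, N j) = N i ⊔ ⨆ j ∈ s \ {i}, N j := by
  have hs : s = {i} ∪ (s \ {i}) := by
    rw [Set.union_diff_cancel']
    · simp
    · simpa using hi
  conv_lhs => rw [hs]
  rw [iSup_union]
  congr 1
  simp

lemma exists_minimalNormal_le [Finite X] {H D : Subgroup X} (hD : IsNormalIn D H)
    (hne : D ≠ ⊥) : ∃ K, IsMinimalNormalIn K H ∧ K ≤ D := by
  classical
  set S : Set (Subgroup X) := {K | IsNormalIn K H ∧ K ≠ ⊥ ∧ K ≤ D} with hS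
  obtain ⟨K, hK, hmin⟩ := Set.Finite.exists_minimalFor id S (Set.toFinite S)
    ⟨D, hD, hne, le_rfl⟩
  refine ⟨K, ⟨hK.1, hK.2.1, ?_⟩, hK.2.2⟩
  intro K' hK'n hK'ne hK'le
  exact le_antisymm hK'le (hmin ⟨hK'n, hK'ne, hK'le.trans hK.2.2⟩ hK'le)

lemma min_le_socle {N H : Subgroup X} (hN : IsMinimalNormalIn N H) : N ≤ socle H :=
  le_iSup₂ (f := fun (N : Subgroup X) (_ : IsMinimalNormalIn N H) => N) N hN

lemma socle_normalIn (H : Subgroup X) : IsNormalIn (socle H) H := by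
  constructor
  · exact iSup₂_le fun N hN => hN.1.1
  · intro g hg n hn
    have h1 : socle H ≤ Subgroup.comap (MulAut.conj g).toMonoidHom (socle H) := by
      refine iSup₂_le fun N hN x hx => ?_
      rw [Subgroup.mem_comap]
      exact min_le_socle hN (by simpa using hN.1.2 g hg x hx)
    simpa using h1 hn

-- transport along isomorphisms
lemma map_symm_map (f : X ≃* Y) (A : Subgroup X) :
    Subgroup.map f.symm.toMonoidHom (Subgroup.map f.toMonoidHom A) = A := by
  rw [Subgroup.map_map]
  convert Subgroup.map_id A
  ext x
  simp

lemma map_map_symm (f : X ≃* Y) (A : Subgroup Y) :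
    Subgroup.map f.toMonoidHom (Subgroup.map f.symm.toMonoidHom A) = A := by
  simpa using map_symm_map f.symm A

lemma isNormalIn_map (f : X ≃* Y) {N H : Subgroup X} (h : IsNormalIn N H) :
    IsNormalIn (Subgroup.map f.toMonoidHom N) (Subgroup.map f.toMonoidHom H) := by
  constructor
  · exact Subgroup.map_mono h.1
  · rintro - ⟨g, hg, rfl⟩ - ⟨n, hn, rfl⟩
    exact ⟨g * n * g⁻¹, h.2 g hg n hn, by simp⟩

lemma map_ne_bot (f : X ≃* Y) {N : Subgroup X} (h : N ≠ ⊥) :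
    Subgroup.map f.toMonoidHom N ≠ ⊥ := by
  intro hb
  apply h
  rw [Subgroup.map_eq_bot_iff] at hb
  rw [eq_bot_iff]
  intro x hx
  have := hb hx
  simp only [MonoidHom.mem_ker] at this
  have : x = 1 := by
    apply f.injective; simpa using this
  simp [this]

lemma isMinimalNormalIn_map (f : X ≃* Y) {N H : Subgroup X}
    (h : IsMinimalNormalIn N H) :
    IsMinimalNormalIn (Subgroup.map f.toMonoidHom N) (Subgroup.map f.toMonoidHom H) := by
  refine ⟨isNormalIn_map f h.1, map_ne_bot f h.2.1, ?_⟩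
  intro K hKn hKne hKle
  have h1 : IsNormalIn (Subgroup.map f.symm.toMonoidHom K) H := by
    have := isNormalIn_map f.symm hKn
    rwa [map_symm_map] at this
  have h2 : Subgroup.map f.symm.toMonoidHom K ≠ ⊥ := map_ne_bot f.symm hKne
  have h3 : Subgroup.map f.symm.toMonoidHom K ≤ N := by
    have := Subgroup.map_mono (f := f.symm.toMonoidHom) hKle
    rwa [map_symm_map] at this
  have := h.2.2 _ h1 h2 h3
  rw [← this, map_map_symm]

lemma socle_map (f : X ≃* Y) (H : Subgroup X) :
    socle (Subgroup.map f.toMonoidHom H) = Subgroup.map f.toMonoidHom (socle H) := by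
  apply le_antisymm
  · refine iSup₂_le fun N hN => ?_
    have h1 : IsMinimalNormalIn (Subgroup.map f.symm.toMonoidHom N) H := by
      have := isMinimalNormalIn_map f.symm hN
      rwa [map_symm_map] at this
    have h2 : Subgroup.map f.symm.toMonoidHom N ≤ socle H := min_le_socle h1
    have := Subgroup.map_mono (f := f.toMonoidHom) h2
    rwa [map_map_symm] at this
  · rw [Subgroup.map_le_iff_le_comap]
    refine iSup₂_le fun N hN x hx => ?_
    rw [Subgroup.mem_comap]
    exact min_le_socle (isMinimalNormalIn_map f hN) ⟨x, hx, rfl⟩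

end QP

namespace QP

theorem main_aux {Ω : Type*} [Finite Ω]
    (G : Subgroup (Equiv.Perm Ω)) (E : Set (Set (Set Ω)))
    (hGtrans : IsTransitivePerm G)
    (hcart : IsCartesianDecompSet E)
    (hinv : InvariantDec G E)
    (htransE : TransitiveOnDec G E)
    (hnormal : ∃ M : Subgroup (Equiv.Perm Ω), IsNormalIn M G ∧
      IsTransitivePerm M ∧ IsNormalDecompSet M E)
    (hqp : ∀ P ∈ E, IsQuasiprimitivePerm (component G P))
    (huniq : ∃ Γ ∈ E, ∃ K : Subgroup (Equiv.Perm ↥Γ),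
      IsMinimalNormalIn K (component G Γ) ∧
      ∀ K' : Subgroup (Equiv.Perm ↥Γ),
        IsMinimalNormalIn K' (component G Γ) → K' = K) :
    IsBlowUpDecomp G E := by
  classical
  obtain ⟨M, hMnorm, hMtrans, hMfix, N, hN1, hN2, hN3, hN4, hN5⟩ := hnormal
  -- M stabilises each partition
  have hMstab : ∀ P ∈ E, M ≤ partStab P := fun P hP g hg =>
    mem_partStab.mpr (hMfix g hg P hP)
  -- an element fixing every block of every partition is trivial
  have hker : ∀ x : Equiv.Perm Ω, (∀ P ∈ E, x ∈ partKernel P) → x = 1 := by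
    intro x hx
    apply Equiv.ext
    intro ω
    show x ω = ω
    set c : Set (Set Ω) → Set Ω := fun P =>
      if h : ∃ b, b ∈ P ∧ ω ∈ b then Classical.choose h else ∅ with hcdef
    have hc : ∀ P ∈ E, c P ∈ P ∧ ω ∈ c P := by
      intro P hP
      have hex : ∃ b, b ∈ P ∧ ω ∈ b := by
        obtain ⟨b, hb, -⟩ := (hcart.2.1 P hP).1.2 ω
        exact ⟨b, hb⟩
      rw [hcdef]
      simp only [dif_pos hex]
      exact Classical.choose_spec hex
    obtain ⟨ω₀, hω₀, huniq0⟩ := hcart.2.2 c (fun P hP => (hc P hP).1)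
    have h2 : ∀ P ∈ E, x ω ∈ c P := by
      intro P hP
      have h3 : x • c P = c P := hx P hP (c P) (hc P hP).1
      rw [← h3]
      exact ⟨ω, (hc P hP).2, rfl⟩
    exact (huniq0 (x ω) h2).trans (huniq0 ω (fun P hP => (hc P hP).2)).symm
  -- `N Q` is in the kernel on any other partition
  have hNK : ∀ P ∈ E, ∀ Q ∈ E, Q ≠ P → N Q ≤ partKernel P := by
    intro P hP Q hQ hne
    have h1 : N Q ≤ ⨆ R ∈ E \ {P}, N R :=
      le_iSup₂ (f := fun (R : Set (Set Ω)) (_ : R ∈ E \ {P}) => N R) Q ⟨hQ, hne⟩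
    rw [← hN5 P hP] at h1
    exact h1.trans inf_le_right
  -- elements of `N P` commute with the complementary product
  have hcomm : ∀ P ∈ E, ∀ a ∈ N P, ∀ x ∈ ⨆ Q ∈ E \ {P}, N Q, Commute a x := by
    intro P hP a ha
    exact commute_biSup (fun Q hQ b hb => hN2 P Q hP hQ.1 (Ne.symm hQ.2) a ha b hb)
  -- every element of M splits
  have hsplit : ∀ P ∈ E, ∀ x ∈ M, ∃ a ∈ N P, ∃ k ∈ ⨆ Q ∈ E \ {P}, N Q, x = a * k := by
    intro P hP x hx
    have hM2 : M = N P ⊔ ⨆ Q ∈ E \ {P}, N Q := by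
      rw [← hN3]; exact biSup_split hP
    exact sup_split (fun a ha => hcomm P hP a ha) x (hM2 ▸ hx)
  -- the intrinsic characterisation of N P
  have hNchar : ∀ P ∈ E, N P = M ⊓ ⨅ Q ∈ E \ {P}, partKernel Q := by
    intro P hP
    apply le_antisymm
    · exact le_inf (hN1 P hP)
        (le_iInf₂ fun Q hQ => hNK Q hQ.1 P hP (fun h => hQ.2 h.symm))
    · intro x hx
      obtain ⟨hxM, hxK⟩ := hx
      obtain ⟨a, ha, k, hk, hx_eq⟩ := hsplit P hP x hxM
      have hk1 : k = 1 := by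
        apply hker
        intro Q hQ
        by_cases hQP : Q = P
        · subst hQP
          have : k ∈ M ⊓ partKernel Q := by rw [hN5 Q hQ]; exact hk
          exact this.2
        · have hxQ : x ∈ partKernel Q := by
            have h1 := Subgroup.mem_iInf.mp hxK Q
            exact Subgroup.mem_iInf.mp h1 ⟨hQ, hQP⟩
          have haQ : a ∈ partKernel Q := hNK Q hQ P hP (fun h => hQP h.symm) ha
          have : k = a⁻¹ * x := by rw [hx_eq]; group
          rw [this]
          exact mul_mem (inv_mem haQ) hxQ
      rw [hx_eq, hk1, mul_one]
      exact ha
  -- componentHom kills partKernel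
  have hφker : ∀ (P : Set (Set Ω)) (x : ↥(partStab P)),
      (x : Equiv.Perm Ω) ∈ partKernel P → componentHom P x = 1 := by
    intro P x hx
    apply Equiv.ext
    intro b
    apply Subtype.ext
    show (x : Equiv.Perm Ω) • (b : Set Ω) = ((1 : Equiv.Perm ↥P) b : Set Ω)
    rw [hx b b.2]
    rfl
  -- component of M equals component of N P
  have hcompM : ∀ P ∈ E, component M P = component (N P) P := by
    intro P hP
    apply le_antisymm
    · intro σ hσ
      obtain ⟨x, hxM, rfl⟩ := mem_component.mp hσ
      obtain ⟨a, ha, k, hk, hx_eq⟩ := hsplit P hP _ hxM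
      have ha_st : a ∈ partStab P := hMstab P hP (hN1 P hP ha)
      have hk_ker : k ∈ partKernel P := by
        have : k ∈ M ⊓ partKernel P := by rw [hN5 P hP]; exact hk
        exact this.2
      have hx2 : x = (⟨a, ha_st⟩ : ↥(partStab P)) * ⟨k, partKernel_le_partStab P hk_ker⟩ :=
        Subtype.ext hx_eq
      rw [hx2, map_mul, hφker P ⟨k, partKernel_le_partStab P hk_ker⟩ hk_ker, mul_one]
      exact mem_component.mpr ⟨⟨a, ha_st⟩, ha, rfl⟩
    · exact component_mono (hN1 P hP) P
  -- component of M is nontrivial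
  have hMcompne : ∀ P ∈ E, component M P ≠ ⊥ := by
    intro P hP
    obtain ⟨hpart, hne_univ, hne_sing⟩ := hcart.2.1 P hP
    -- there exist two distinct blocks
    have h2b : ∃ b ∈ P, ∃ b' ∈ P, b ≠ b' := by
      by_contra hcon
      push_neg at hcon
      have hPne : ∃ b, b ∈ P := by
        by_contra hPe
        push_neg at hPe
        exact hne_sing (fun b hb => absurd hb (hPe b))
      obtain ⟨b, hb⟩ := hPne
      apply hne_univ
      have hPb : P = {b} := by
        ext b''
        simp only [Set.mem_singleton_iff]
        exact ⟨fun h => (hcon b hb b'' h).symm, fun h => h ▸ hb⟩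
      have hbu : b = Set.univ := by
        ext ω
        simp only [Set.mem_univ, iff_true]
        obtain ⟨b', ⟨hb', hωb'⟩, -⟩ := hpart.2 ω
        rw [hcon b hb b' hb']
        exact hωb'
      rw [hPb, hbu]
    obtain ⟨b, hb, b', hb', hbb'⟩ := h2b
    have hbne : b.Nonempty := Set.nonempty_iff_ne_empty.mpr (fun h => hpart.1 (h ▸ hb))
    have hb'ne : b'.Nonempty := Set.nonempty_iff_ne_empty.mpr (fun h => hpart.1 (h ▸ hb'))
    obtain ⟨ω, hω⟩ := hbne
    obtain ⟨ω', hω'⟩ := hb'ne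
    obtain ⟨m, hm, hmω⟩ := hMtrans ω ω'
    have hms : m ∈ partStab P := hMstab P hP hm
    intro hbot
    have hσ : componentHom P ⟨m, hms⟩ ∈ component M P := mem_component.mpr ⟨⟨m, hms⟩, hm, rfl⟩
    rw [hbot, Subgroup.mem_bot] at hσ
    have hval : m • b = b := by
      have := congrArg (fun σ : Equiv.Perm ↥P => ((σ ⟨b, hb⟩ : ↥P) : Set Ω)) hσ
      exact this
    have hω'b : ω' ∈ b := by
      rw [← hval, ← hmω]
      exact ⟨ω, hω, rfl⟩
    obtain ⟨bu, -, hbu⟩ := hpart.2 ω'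
    exact hbb' ((hbu b ⟨hb, hω'b⟩).trans (hbu b' ⟨hb', hω'⟩).symm)
  -- component of M is normal in component of G
  have hMGnorm : ∀ P ∈ E, IsNormalIn (component M P) (component G P) := by
    intro P hP
    refine ⟨component_mono hMnorm.1 P, ?_⟩
    intro gb hgb nb hnb
    obtain ⟨y, hyG, rfl⟩ := mem_component.mp hgb
    obtain ⟨x, hxM, rfl⟩ := mem_component.mp hnb
    refine mem_component.mpr ⟨y * x * y⁻¹, ?_, ?_⟩
    · exact hMnorm.2 _ hyG _ hxM
    · rw [map_mul, map_mul, map_inv]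
  -- uniqueness of minimal normal subgroups at every P
  have huniqAll : ∀ P ∈ E, ∀ K1 K2 : Subgroup (Equiv.Perm ↥P),
      IsMinimalNormalIn K1 (component G P) → IsMinimalNormalIn K2 (component G P) →
        K1 = K2 := by
    obtain ⟨Γ, hΓ, K, hK, hKuniq⟩ := huniq
    intro P hP K1 K2 h1 h2
    obtain ⟨g, hg, hgP⟩ := htransE Γ hΓ P hP
    subst hgP
    have hGconj : Subgroup.map (MulAut.conj g).toMonoidHom G = G := by
      apply le_antisymm
      · rintro - ⟨h, hh, rfl⟩
        exact mul_mem (mul_mem hg hh) (inv_mem hg)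
      · intro x hx
        exact ⟨g⁻¹ * x * g, mul_mem (mul_mem (inv_mem hg) hx) hg,
          show g * (g⁻¹ * x * g) * g⁻¹ = x by group⟩
    have hcomp : component G (g • Γ) =
        Subgroup.map (permMulEquiv (blockEquiv g Γ)).toMonoidHom (component G Γ) := by
      conv_lhs => rw [← hGconj]
      exact component_map_conj g Γ G
    rw [hcomp] at h1 h2
    set ψ := permMulEquiv (blockEquiv g Γ)
    have e1 : IsMinimalNormalIn (Subgroup.map ψ.symm.toMonoidHom K1) (component G Γ) := by
      have := isMinimalNormalIn_map ψ.symm h1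
      rwa [map_symm_map] at this
    have e2 : IsMinimalNormalIn (Subgroup.map ψ.symm.toMonoidHom K2) (component G Γ) := by
      have := isMinimalNormalIn_map ψ.symm h2
      rwa [map_symm_map] at this
    have he : Subgroup.map ψ.symm.toMonoidHom K1 = Subgroup.map ψ.symm.toMonoidHom K2 :=
      (hKuniq _ e1).trans (hKuniq _ e2).symm
    exact Subgroup.map_injective (f := ψ.symm.toMonoidHom) ψ.symm.injective he
  -- the socle facts
  have hsoc : ∀ P ∈ E, IsMinimalNormalIn (socle (component G P)) (component G P) ∧
      socle (component G P) ≤ component M P := by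
    intro P hP
    obtain ⟨K0, hK0, hK0le⟩ := exists_minimalNormal_le (hMGnorm P hP) (hMcompne P hP)
    have hK0G : IsMinimalNormalIn K0 (component G P) := hK0
    have hsocK : socle (component G P) = K0 :=
      le_antisymm (iSup₂_le fun L hL => le_of_eq (huniqAll P hP L K0 hL hK0G))
        (min_le_socle hK0G)
    rw [hsocK]
    exact ⟨hK0G, hK0le⟩
  -- definition of N' and M'
  set N' : Set (Set Ω) → Subgroup (Equiv.Perm Ω) := fun P =>
    N P ⊓ Subgroup.map (partStab P).subtype
      (Subgroup.comap (componentHom P) (socle (component G P))) with hN'def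
  set M' : Subgroup (Equiv.Perm Ω) := ⨆ P ∈ E, N' P with hM'def
  have hmemN' : ∀ (P : Set (Set Ω)) (x : Equiv.Perm Ω), x ∈ N' P ↔
      x ∈ N P ∧ ∃ hx : x ∈ partStab P,
        componentHom P ⟨x, hx⟩ ∈ socle (component G P) := by
    intro P x
    rw [hN'def, Subgroup.mem_inf, mem_map_subtype_comap]
  have hN'N : ∀ P, N' P ≤ N P := fun P => inf_le_left
  have hN'M : ∀ P ∈ E, N' P ≤ M := fun P hP => (hN'N P).trans (hN1 P hP)
  have hM'M : M' ≤ M := iSup₂_le hN'M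
  have hN'M' : ∀ P ∈ E, N' P ≤ M' :=
    fun P hP => le_iSup₂ (f := fun (P : Set (Set Ω)) (_ : P ∈ E) => N' P) P hP
  have hN'K : ∀ P ∈ E, (⨆ Q ∈ E \ {P}, N' Q) ≤ partKernel P := fun P hP =>
    iSup₂_le fun Q hQ => (hN'N Q).trans (hNK P hP Q hQ.1 hQ.2)
  -- splitting in M'
  have hsplit' : ∀ P ∈ E, ∀ x ∈ M', ∃ a ∈ N' P, ∃ k ∈ ⨆ Q ∈ E \ {P}, N' Q,
      x = a * k := by
    intro P hP x hx
    have hM2 : M' = N' P ⊔ ⨆ Q ∈ E \ {P}, N' Q := by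
      rw [hM'def]; exact biSup_split hP
    refine sup_split ?_ x (hM2 ▸ hx)
    intro a ha
    exact commute_biSup (fun Q hQ b hb =>
      hN2 P Q hP hQ.1 (Ne.symm hQ.2) a (hN'N P ha) b (hN'N Q hb))
  -- component of N' P is the socle
  have hcompN' : ∀ P ∈ E, component (N' P) P = socle (component G P) := by
    intro P hP
    apply le_antisymm
    · intro σ hσ
      obtain ⟨x, hxN', rfl⟩ := mem_component.mp hσ
      obtain ⟨-, hx, hs⟩ := (hmemN' P ↑x).mp hxN'
      exact hs
    · intro σ hσ
      have hσM : σ ∈ component M P := (hsoc P hP).2 hσ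
      rw [hcompM P hP] at hσM
      obtain ⟨x, hxN, rfl⟩ := mem_component.mp hσM
      exact mem_component.mpr ⟨x, (hmemN' P ↑x).mpr ⟨hxN, x.2, hσ⟩, rfl⟩
  -- component of M' is the socle
  have hcompM' : ∀ P ∈ E, component M' P = socle (component G P) := by
    intro P hP
    apply le_antisymm
    · intro σ hσ
      obtain ⟨x, hxM', rfl⟩ := mem_component.mp hσ
      obtain ⟨a, ha, k, hk, hx_eq⟩ := hsplit' P hP _ hxM'
      have ha_st : a ∈ partStab P := hMstab P hP (hN'M P hP ha)
      have hk_ker : k ∈ partKernel P := hN'K P hP hk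
      have hx2 : x = (⟨a, ha_st⟩ : ↥(partStab P)) * ⟨k, partKernel_le_partStab P hk_ker⟩ :=
        Subtype.ext hx_eq
      rw [hx2, map_mul, hφker P ⟨k, partKernel_le_partStab P hk_ker⟩ hk_ker, mul_one]
      rw [← hcompN' P hP]
      exact mem_component.mpr ⟨⟨a, ha_st⟩, ha, rfl⟩
    · rw [← hcompN' P hP]
      exact component_mono (hN'M' P hP) P
  -- transitivity of the socle components
  have hsoctrans : ∀ P ∈ E, IsTransitivePerm (socle (component G P)) := fun P hP =>
    (hqp P hP).2 _ (socle_normalIn _) ((hsoc P hP).1.2.1)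
  -- M' is transitive
  have hM'trans : IsTransitivePerm M' := by
    intro ω ω'
    set cb : Set (Set Ω) → Set Ω := fun P =>
      if h : ∃ b, b ∈ P ∧ ω ∈ b then Classical.choose h else ∅ with hcbdef
    set cb' : Set (Set Ω) → Set Ω := fun P =>
      if h : ∃ b, b ∈ P ∧ ω' ∈ b then Classical.choose h else ∅ with hcb'def
    have hcb : ∀ P ∈ E, cb P ∈ P ∧ ω ∈ cb P := by
      intro P hP
      have hex : ∃ b, b ∈ P ∧ ω ∈ b := by
        obtain ⟨b, hb, -⟩ := (hcart.2.1 P hP).1.2 ω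
        exact ⟨b, hb⟩
      rw [hcbdef]; simp only [dif_pos hex]
      exact Classical.choose_spec hex
    have hcb' : ∀ P ∈ E, cb' P ∈ P ∧ ω' ∈ cb' P := by
      intro P hP
      have hex : ∃ b, b ∈ P ∧ ω' ∈ b := by
        obtain ⟨b, hb, -⟩ := (hcart.2.1 P hP).1.2 ω'
        exact ⟨b, hb⟩
      rw [hcb'def]; simp only [dif_pos hex]
      exact Classical.choose_spec hex
    have hmain : ∀ s : Finset (Set (Set Ω)), ↑s ⊆ E →
        ∃ m ∈ ⨆ P ∈ (↑s : Set (Set (Set Ω))), N' P, ∀ P ∈ s, m • cb P = cb' P := by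
      intro s
      induction s using Finset.induction_on with
      | empty => exact fun _ => ⟨1, one_mem _, fun P hP => absurd hP (by simp)⟩
      | @insert P₀ s hP₀s ih =>
        intro hsub
        have hP₀E : P₀ ∈ E := hsub (by simp)
        have hsE : ↑s ⊆ E := fun Q hQ => hsub (by simp [hQ])
        obtain ⟨m, hm, hmprop⟩ := ih hsE
        -- get an element of N' P₀ moving cb P₀ to cb' P₀
        obtain ⟨σ, hσ, hσap⟩ := hsoctrans P₀ hP₀E ⟨cb P₀, (hcb P₀ hP₀E).1⟩
          ⟨cb' P₀, (hcb' P₀ hP₀E).1⟩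
        rw [← hcompN' P₀ hP₀E] at hσ
        obtain ⟨x, hxN', hxσ⟩ := mem_component.mp hσ
        have hxblock : (x : Equiv.Perm Ω) • cb P₀ = cb' P₀ := by
          have h2 : (((componentHom P₀ x) ⟨cb P₀, (hcb P₀ hP₀E).1⟩ : ↥P₀) : Set Ω)
              = cb' P₀ := by rw [hxσ, hσap]
          exact h2
        -- the inductive element fixes blocks of P₀
        have hmker : m ∈ partKernel P₀ := by
          have hle : (⨆ P ∈ (↑s : Set (Set (Set Ω))), N' P) ≤ partKernel P₀ :=
            iSup₂_le fun Q hQ => (hN'N Q).trans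
              (hNK P₀ hP₀E Q (hsE hQ) (fun h => hP₀s (h ▸ hQ)))
          exact hle hm
        refine ⟨(x : Equiv.Perm Ω) * m, ?_, ?_⟩
        · apply mul_mem
          · exact le_iSup₂ (f := fun (P : Set (Set Ω))
              (_ : P ∈ (↑(insert P₀ s) : Set (Set (Set Ω)))) => N' P) P₀ (by simp) hxN'
          · have hle2 : (⨆ P ∈ (↑s : Set (Set (Set Ω))), N' P) ≤
                ⨆ P ∈ (↑(insert P₀ s) : Set (Set (Set Ω))), N' P :=
              iSup₂_mono' fun Q hQ => ⟨Q, by simp [hQ], le_rfl⟩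
            exact hle2 hm
        · intro P hP
          rcases Finset.mem_insert.mp hP with hPeq | hPs
          · subst hPeq
            rw [mul_smul, hmker _ (hcb P hP₀E).1, hxblock]
          · have hxker : (x : Equiv.Perm Ω) ∈ partKernel P :=
              (hN'N P₀).trans (hNK P (hsE hPs) P₀ hP₀E
                (fun h => hP₀s (h ▸ hPs))) hxN'
            rw [mul_smul, hmprop P hPs, hxker _ (hcb' P (hsE hPs)).1]
    obtain ⟨m, hm, hmprop⟩ := hmain hcart.1.toFinset (by simp [Set.Finite.coe_toFinset])
    have hmM' : m ∈ M' := by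
      rw [hM'def]
      rwa [Set.Finite.coe_toFinset] at hm
    refine ⟨m, hmM', ?_⟩
    obtain ⟨ω₀, hω₀, huniq0⟩ := hcart.2.2 cb' (fun P hP => (hcb' P hP).1)
    have h2 : ∀ P ∈ E, m ω ∈ cb' P := by
      intro P hP
      have := hmprop P (by rwa [Set.Finite.mem_toFinset])
      rw [← this]
      exact ⟨ω, (hcb P hP).2, rfl⟩
    exact (huniq0 (m ω) h2).trans (huniq0 ω' (fun P hP => (hcb' P hP).2)).symm
  -- conjugation sends N' P to N' (g • P)
  have hconjN' : ∀ g ∈ G, ∀ P ∈ E,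
      Subgroup.map (MulAut.conj g).toMonoidHom (N' P) = N' (g • P) := by
    intro g hg P hP
    have hgPE : g • P ∈ E := hinv g hg P hP
    have hGconj : Subgroup.map (MulAut.conj g).toMonoidHom G = G := by
      apply le_antisymm
      · rintro - ⟨h, hh, rfl⟩
        exact mul_mem (mul_mem hg hh) (inv_mem hg)
      · intro x hx
        exact ⟨g⁻¹ * x * g, mul_mem (mul_mem (inv_mem hg) hx) hg,
          show g * (g⁻¹ * x * g) * g⁻¹ = x by group⟩
    set ψ := permMulEquiv (blockEquiv g P) with hψdef
    have hsocGP : socle (component G (g • P)) =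
        Subgroup.map ψ.toMonoidHom (socle (component G P)) := by
      rw [show component G (g • P) =
          Subgroup.map ψ.toMonoidHom (component G P) by
        conv_lhs => rw [← hGconj]
        exact component_map_conj g P G]
      exact socle_map ψ (component G P)
    ext x
    rw [Subgroup.mem_map]
    constructor
    · rintro ⟨y, hy, rfl⟩
      obtain ⟨hyN, hyst, hys⟩ := (hmemN' P y).mp hy
      show g * y * g⁻¹ ∈ N' (g • P)
      rw [hmemN' (g • P)]
      have hystc : g * y * g⁻¹ ∈ partStab (g • P) := by
        rw [← map_conj_partStab]
        exact ⟨y, hyst, rfl⟩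
      refine ⟨?_, hystc, ?_⟩
      · rw [hNchar (g • P) hgPE]
        refine ⟨hMnorm.2 g hg y (hN1 P hP hyN), ?_⟩
        show g * y * g⁻¹ ∈ ⨅ Q ∈ E \ {g • P}, partKernel Q
        rw [Subgroup.mem_iInf]
        intro Q'
        rw [Subgroup.mem_iInf]
        rintro ⟨hQ'E, hQ'ne⟩
        have hQE : g⁻¹ • Q' ∈ E := hinv g⁻¹ (inv_mem hg) Q' hQ'E
        have hQne : g⁻¹ • Q' ≠ P := by
          intro h
          apply hQ'ne
          rw [← h, smul_inv_smul]
          rfl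
        have hyker : y ∈ partKernel (g⁻¹ • Q') :=
          hNK (g⁻¹ • Q') hQE P hP (fun h => hQne h.symm) hyN
        have : g * y * g⁻¹ ∈ partKernel (g • (g⁻¹ • Q')) := by
          rw [← map_conj_partKernel]
          exact ⟨y, hyker, rfl⟩
        rwa [smul_inv_smul] at this
      · rw [componentHom_conj g P y hyst hystc, hsocGP]
        exact ⟨_, hys, rfl⟩
    · intro hx
      obtain ⟨hxN, hxst, hxs⟩ := (hmemN' (g • P) x).mp hx
      refine ⟨g⁻¹ * x * g, ?_, show g * (g⁻¹ * x * g) * g⁻¹ = x by group⟩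
      rw [hmemN' P]
      have hyst : g⁻¹ * x * g ∈ partStab P := by
        rw [mem_partStab, mul_smul, mul_smul, mem_partStab.mp hxst, inv_smul_smul]
      refine ⟨?_, hyst, ?_⟩
      · rw [hNchar P hP]
        constructor
        · have := hMnorm.2 g⁻¹ (inv_mem hg) x (hN1 (g • P) hgPE hxN)
          rwa [inv_inv] at this
        · show g⁻¹ * x * g ∈ ⨅ Q ∈ E \ {P}, partKernel Q
          rw [Subgroup.mem_iInf]
          intro Q
          rw [Subgroup.mem_iInf]
          rintro ⟨hQE, hQne⟩
          have hgQE : g • Q ∈ E := hinv g hg Q hQE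
          have hgQne : g • Q ≠ g • P := fun h => hQne (smul_left_cancel g h)
          have hxker : x ∈ partKernel (g • Q) := by
            have h1 : N (g • P) ≤ partKernel (g • Q) :=
              hNK (g • Q) hgQE (g • P) hgPE (fun h => hgQne h.symm)
            exact h1 hxN
          rw [← map_conj_partKernel] at hxker
          obtain ⟨k, hk, hke⟩ := hxker
          have : g⁻¹ * x * g = k := by
            rw [← hke]
            show g⁻¹ * (g * k * g⁻¹) * g = k
            group
          rwa [this]
      · have hx2 : g * (g⁻¹ * x * g) * g⁻¹ ∈ partStab (g • P) := by
          rw [show g * (g⁻¹ * x * g) * g⁻¹ = x by group]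
          exact hxst
        have hsub : (⟨x, hxst⟩ : ↥(partStab (g • P)))
            = ⟨g * (g⁻¹ * x * g) * g⁻¹, hx2⟩ :=
          Subtype.ext (by group)
        rw [hsub] at hxs
        rw [componentHom_conj g P (g⁻¹ * x * g) hyst hx2, hsocGP] at hxs
        obtain ⟨τ, hτ, hτe⟩ := hxs
        have : τ = componentHom P ⟨g⁻¹ * x * g, hyst⟩ := ψ.injective hτe
        rwa [this] at hτ
  -- M' is normal in G
  have hM'norm : IsNormalIn M' G := by
    refine ⟨hM'M.trans hMnorm.1, ?_⟩
    intro g hg n hn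
    have hle : Subgroup.map (MulAut.conj g).toMonoidHom M' ≤ M' := by
      rw [hM'def, Subgroup.map_iSup]
      refine iSup_le fun P => ?_
      rw [Subgroup.map_iSup]
      refine iSup_le fun hP => ?_
      rw [hconjN' g hg P hP]
      exact hN'M' (g • P) (hinv g hg P hP)
    exact hle ⟨n, hn, MulAut.conj_apply g n⟩
  -- final assembly
  refine ⟨hcart, hinv, htransE, M', hM'norm, hM'trans, ⟨?_, N', ?_, ?_, ?_, ?_, ?_⟩, ?_⟩
  · exact fun g hg P hP => hMfix g (hM'M hg) P hP
  · exact fun P hP => hN'M' P hP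
  · exact fun P Q hP hQ hne x hx y hy => hN2 P Q hP hQ hne x (hN'N P hx) y (hN'N Q hy)
  · exact hM'def.symm
  · intro P hP
    rw [eq_bot_iff, ← hN4 P hP]
    exact inf_le_inf (hN'N P) (iSup₂_mono fun Q hQ => hN'N Q)
  · -- kernel condition
    intro P hP
    apply le_antisymm
    · intro x hx
      obtain ⟨hxM', hxK⟩ := hx
      obtain ⟨a, ha, k, hk, hx_eq⟩ := hsplit' P hP x hxM'
      have hk_ker : k ∈ partKernel P := hN'K P hP hk
      have ha_ker : a ∈ partKernel P := by
        have : a = x * k⁻¹ := by rw [hx_eq]; group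
        rw [this]
        exact mul_mem hxK (inv_mem hk_ker)
      have ha_bot : a ∈ (⊥ : Subgroup (Equiv.Perm Ω)) := by
        rw [← hN4 P hP]
        refine ⟨hN'N P ha, ?_⟩
        rw [← hN5 P hP]
        exact ⟨hN1 P hP (hN'N P ha), ha_ker⟩
      rw [Subgroup.mem_bot] at ha_bot
      rw [hx_eq, ha_bot, one_mul]
      exact hk
    · apply le_inf
      · exact iSup₂_le fun Q hQ => hN'M' Q hQ.1
      · exact hN'K P hP
  · exact fun P hP => hcompM' P hP

end QP


/-- If G is transitive, E is a transitive normal G-invariant Cartesian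
decomposition with quasiprimitive components, and some component has a unique minimal
normal subgroup, then E is a blow-up decomposition for G. -/
theorem normal_decomposition_unique_minimal_normal_is_blowup
    {Ω : Type*} [Finite Ω]
    (G : Subgroup (Equiv.Perm Ω)) (E : Set (Set (Set Ω)))
    (hGtrans : QP.IsTransitivePerm G)
    (hcart : QP.IsCartesianDecompSet E)
    (hinv : QP.InvariantDec G E)
    (htransE : QP.TransitiveOnDec G E)
    (hnormal : ∃ M : Subgroup (Equiv.Perm Ω), QP.IsNormalIn M G ∧
      QP.IsTransitivePerm M ∧ QP.IsNormalDecompSet M E)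
    (hqp : ∀ P ∈ E, QP.IsQuasiprimitivePerm (QP.component G P))
    (huniq : ∃ Γ ∈ E, ∃ K : Subgroup (Equiv.Perm ↥Γ),
      QP.IsMinimalNormalIn K (QP.component G Γ) ∧
      ∀ K' : Subgroup (Equiv.Perm ↥Γ),
        QP.IsMinimalNormalIn K' (QP.component G Γ) → K' = K) :
    QP.IsBlowUpDecomp G E := by
  exact QP.main_aux G E hGtrans hcart hinv htransE hnormal hqp huniq
end

section
/- Let G ≤ Sym(Ω) be a finite quasiprimitive group whose unique minimal normal subgroup M = Soc G is abelian (type HA), and let E be a transitive G-invariant Cartesian decomposition of Ω that is M-normal. Then for each Γ ∈ E, M^Γ is a regular elementary abelian minimal normal subgroup of G^Γ, the component G^Γ is primitive of affine type, and Soc(G^Γ) = M^Γ; hence E is a blow-up decomposition. -/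
open scoped Pointwise

namespace QP
/-- A primitive permutation group: transitive, with only trivial blocks. -/
def IsPrimitivePerm {α : Type*} (H : Subgroup (Equiv.Perm α)) : Prop :=
  IsTransitivePerm H ∧
    ∀ B : Set α, MulAction.IsBlock ↥H B → B.Subsingleton ∨ B = Set.univ
end QP

/-!
An abelian transitive permutation group is regular and self-centralising; hence a group in which
such a subgroup `A` is minimal normal is primitive (the elements of `A` stabilising a block form a
normal subgroup) and has socle `A` (any other minimal normal subgroup would centralise `A`).
Everything therefore reduces to the minimality of `M^Γ` in `G^Γ`. Every element of `M^Γ` is induced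
by some `t ∈ M` acting trivially on all the other partitions of `E`. If `t` induces an element of a
normal subgroup `K` of `G^Γ`, so does each `G`-conjugate `g t g⁻¹`: when `g` stabilises `Γ` because
`K` is normal, and otherwise because `g t g⁻¹` acts trivially on `Γ = g (g⁻¹ Γ)`. Thus the normal
core in `G` of the preimage of `K` meets `M` nontrivially, and minimality of `M` gives `K = M^Γ`.
-/

namespace QP

section Group

variable {X : Type*} [Group X] {M N A G V : Subgroup X}

lemma IsNormalIn.inf (hN : IsNormalIn N G) (hA : IsNormalIn A G) : IsNormalIn (N ⊓ A) G :=
  ⟨inf_le_left.trans hN.1, fun g hg x hx => ⟨hN.2 g hg x hx.1, hA.2 g hg x hx.2⟩⟩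

lemma IsNormalIn.mul_comm_of_inf_eq_bot (hN : IsNormalIn N G) (hA : IsNormalIn A G)
    (h : N ⊓ A = ⊥) {n a : X} (hn : n ∈ N) (ha : a ∈ A) : n * a = a * n := by
  have hcommN : n * (a * n⁻¹ * a⁻¹) ∈ N := mul_mem hn (hN.2 a (hA.1 ha) _ (inv_mem hn))
  have hcommA : n * a * n⁻¹ * a⁻¹ ∈ A := mul_mem (hA.2 n (hN.1 hn) a ha) (inv_mem ha)
  have hcomm : n * a * n⁻¹ * a⁻¹ = 1 := by
    rw [← Subgroup.mem_bot, ← h]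
    exact Subgroup.mem_inf.2 ⟨by simpa only [mul_assoc] using hcommN, hcommA⟩
  rwa [mul_inv_eq_one, mul_inv_eq_iff_eq_mul] at hcomm

lemma IsMinimalNormalIn.eq_of_inf_ne_bot (hN : IsMinimalNormalIn N G)
    (hA : IsMinimalNormalIn A G) (h : N ⊓ A ≠ ⊥) : N = A :=
  (hN.2.2 _ (hN.1.inf hA.1) h inf_le_left).symm.trans (hA.2.2 _ (hN.1.inf hA.1) h inf_le_right)

lemma socle_eq_of_forall_eq (hA : IsMinimalNormalIn A G)
    (h : ∀ N, IsMinimalNormalIn N G → N = A) : socle G = A := by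
  have hmin : {N | IsMinimalNormalIn N G} = {A} := Set.eq_singleton_iff_unique_mem.2 ⟨hA, h⟩
  rw [socle, hmin, iSup_singleton]

lemma IsMinimalNormalIn.exists_prime_exponent [Finite X] (hM : IsMinimalNormalIn M G)
    (hMab : ∀ x ∈ M, ∀ y ∈ M, x * y = y * x) : ∃ p : ℕ, p.Prime ∧ ∀ x ∈ M, x ^ p = 1 := by
  set p := (Nat.card M).minFac
  have hp : p.Prime := Nat.minFac_prime ((Subgroup.one_lt_card_iff_ne_bot M).2 hM.2.1).ne'
  have := Fact.mk hp
  obtain ⟨x, hx⟩ := exists_prime_orderOf_dvd_card' p (Nat.minFac_dvd _)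
  let K : Subgroup X :=
    { carrier := {y | y ∈ M ∧ y ^ p = 1}
      one_mem' := ⟨M.one_mem, one_pow p⟩
      mul_mem' := fun {y z} ⟨hyM, hy⟩ ⟨hzM, hz⟩ =>
        ⟨mul_mem hyM hzM, by rw [(Commute.mul_pow (hMab y hyM z hzM) p), hy, hz, one_mul]⟩
      inv_mem' := fun {y} ⟨hyM, hy⟩ => ⟨inv_mem hyM, by rw [inv_pow, hy, inv_one]⟩ }
  have hK : IsNormalIn K G :=
    ⟨fun y hy => hM.1.1 hy.1, fun g hg y hy =>
      ⟨hM.1.2 g hg y hy.1, by rw [conj_pow, hy.2, mul_one, mul_inv_cancel]⟩⟩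
  have hxK : (x : X) ∈ K := ⟨x.2, by rw [← Subgroup.coe_pow, ← hx, pow_orderOf_eq_one]; rfl⟩
  have hx1 : (x : X) ≠ 1 := fun h => hp.ne_one (by rw [← hx, show x = 1 from Subtype.ext h, orderOf_one])
  have hKne : K ≠ ⊥ := fun h => hx1 (Subgroup.mem_bot.1 (h ▸ hxK))
  have hKM : K = M := hM.2.2 K hK hKne fun y hy => hy.1
  exact ⟨p, hp, fun y hy => (hKM ▸ hy : y ∈ K).2⟩

lemma IsMinimalNormalIn.le_of_forall_conj_mem (hM : IsMinimalNormalIn M G) {t : X} (htM : t ∈ M)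
    (ht : t ≠ 1) (hV : ∀ g ∈ G, g * t * g⁻¹ ∈ V) : M ≤ V := by
  let W : Subgroup X := M ⊓ ⨅ g ∈ G, V.comap (MulAut.conj g).toMonoidHom
  have hmem : ∀ x, x ∈ W ↔ x ∈ M ∧ ∀ g ∈ G, g * x * g⁻¹ ∈ V := by
    intro x
    simp [W, Subgroup.mem_iInf]
  have hW : IsNormalIn W G := by
    refine ⟨inf_le_left.trans hM.1.1, fun h hh x hx => (hmem _).2 ⟨hM.1.2 h hh x ((hmem x).1 hx).1,
      fun g hg => ?_⟩⟩
    simpa only [mul_inv_rev, mul_assoc] using ((hmem x).1 hx).2 (g * h) (mul_mem hg hh)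
  have hWne : W ≠ ⊥ := fun h => ht (Subgroup.mem_bot.1 (h ▸ (hmem t).2 ⟨htM, hV⟩))
  have hWM : W = M := hM.2.2 W hW hWne inf_le_left
  intro x hx
  rw [← hWM] at hx
  simpa using ((hmem x).1 hx).2 1 G.one_mem

lemma exists_mul_eq_of_mem_sup (hMab : ∀ x ∈ M, ∀ y ∈ M, x * y = y * x) (hA : A ≤ M) (hN : N ≤ M)
    {m : X} (hm : m ∈ A ⊔ N) : ∃ a ∈ A, ∃ n ∈ N, a * n = m := by
  have hnorm : A ≤ Subgroup.normalizer (N : Set X) := Subgroup.le_normalizer_iff.2 fun a ha n hn => by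
    rwa [hMab a (hA ha) n (hN hn), mul_inv_cancel_right]
  rwa [← SetLike.mem_coe, Subgroup.coe_mul_of_left_le_normalizer_right A N hnorm, Set.mem_mul] at hm

end Group

section Perm

variable {α : Type*} {A H : Subgroup (Equiv.Perm α)}

lemma IsTransitivePerm.ne_bot [Nontrivial α] (hH : IsTransitivePerm H) : H ≠ ⊥ := by
  rintro rfl
  obtain ⟨a, b, hab⟩ := exists_pair_ne α
  obtain ⟨g, hg, rfl⟩ := hH a b
  rw [Subgroup.mem_bot.1 hg] at hab
  exact hab rfl

lemma IsTransitivePerm.isRegularPerm_of_comm (hH : IsTransitivePerm H)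
    (hab : ∀ x ∈ H, ∀ y ∈ H, x * y = y * x) : IsRegularPerm H := by
  refine ⟨hH, fun g hg a hga => Equiv.ext fun b => ?_⟩
  obtain ⟨y, hy, rfl⟩ := hH a b
  rw [← Equiv.Perm.mul_apply, hab g hg y hy, Equiv.Perm.mul_apply, hga]
  rfl

lemma IsTransitivePerm.mem_of_forall_mul_comm (hA : IsTransitivePerm A)
    (hab : ∀ x ∈ A, ∀ y ∈ A, x * y = y * x) {n : Equiv.Perm α} (hn : ∀ a ∈ A, n * a = a * n) :
    n ∈ A := by
  rcases isEmpty_or_nonempty α with hα | hα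
  · rw [Subsingleton.elim n 1]
    exact A.one_mem
  obtain ⟨x⟩ := hα
  obtain ⟨a₀, ha₀, hx⟩ := hA x (n x)
  convert ha₀
  ext y
  obtain ⟨a, ha, rfl⟩ := hA x y
  calc n (a x) = a (a₀ x) := by rw [← Equiv.Perm.mul_apply, hn a ha, Equiv.Perm.mul_apply, hx]
    _ = a₀ (a x) := by rw [← Equiv.Perm.mul_apply, hab a ha a₀ ha₀]; rfl

lemma IsNormalIn.inf_stabilizer_of_isBlock (hAH : IsNormalIn A H) (hA : IsTransitivePerm A)
    (hab : ∀ x ∈ A, ∀ y ∈ A, x * y = y * x) {B : Set α} (hB : MulAction.IsBlock H B) {b₀ : α}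
    (hb₀ : b₀ ∈ B) : IsNormalIn (A ⊓ MulAction.stabilizer (Equiv.Perm α) B) H := by
  refine ⟨inf_le_left.trans hAH.1, fun h hh q hq => ?_⟩
  obtain ⟨a, ha, hab₀⟩ := hA b₀ (h b₀)
  set h₀ := a⁻¹ * h
  have hh₀ : h₀ ∈ H := mul_mem (inv_mem (hAH.1 ha)) hh
  have hh₀B : h₀ • B = B := hB.smul_eq_of_mem (g := ⟨h₀, hh₀⟩) hb₀ <| by
    simpa [h₀, ← hab₀] using hb₀
  have hconj : h₀ * q * h₀⁻¹ ∈ A ⊓ MulAction.stabilizer (Equiv.Perm α) B := by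
    obtain ⟨hqA, hqB⟩ := Subgroup.mem_inf.1 hq
    refine Subgroup.mem_inf.2 ⟨hAH.2 _ hh₀ q hqA, ?_⟩
    rw [MulAction.mem_stabilizer_iff] at hqB ⊢
    rw [mul_smul, mul_smul, inv_smul_eq_iff.2 hh₀B.symm, hqB, hh₀B]
  have hh : h * q * h⁻¹ = a * (h₀ * q * h₀⁻¹) * a⁻¹ := by simp only [h₀]; group
  rwa [hh, hab a ha _ (Subgroup.mem_inf.1 hconj).1, mul_inv_cancel_right]

lemma IsMinimalNormalIn.isPrimitivePerm_of_comm (hAH : IsMinimalNormalIn A H)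
    (hA : IsTransitivePerm A) (hab : ∀ x ∈ A, ∀ y ∈ A, x * y = y * x) : IsPrimitivePerm H := by
  refine ⟨fun a b => (hA a b).imp fun g hg => ⟨hAH.1.1 hg.1, hg.2⟩, fun B hB => ?_⟩
  rcases B.eq_empty_or_nonempty with rfl | ⟨b₀, hb₀⟩
  · exact Or.inl Set.subsingleton_empty
  have hstab : ∀ a ∈ A, a b₀ ∈ B → a ∈ A ⊓ MulAction.stabilizer (Equiv.Perm α) B :=
    fun a ha hab₀ => Subgroup.mem_inf.2 ⟨ha, hB.smul_eq_of_mem (g := ⟨a, hAH.1.1 ha⟩) hb₀ hab₀⟩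
  rcases eq_or_ne (A ⊓ MulAction.stabilizer (Equiv.Perm α) B) ⊥ with hbot | hne
  · refine Or.inl (Set.subsingleton_of_forall_eq b₀ fun x hx => ?_)
    obtain ⟨a, ha, rfl⟩ := hA b₀ x
    have ha1 := hstab a ha hx
    rw [hbot, Subgroup.mem_bot] at ha1
    rw [ha1]
    rfl
  · have hQA := hAH.2.2 _ (hAH.1.inf_stabilizer_of_isBlock hA hab hB hb₀) hne inf_le_left
    refine Or.inr (Set.eq_univ_of_forall fun x => ?_)
    obtain ⟨a, ha, rfl⟩ := hA b₀ x
    have haQ : a ∈ A ⊓ MulAction.stabilizer (Equiv.Perm α) B := by rw [hQA]; exact ha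
    rw [← MulAction.mem_stabilizer_iff.1 (Subgroup.mem_inf.1 haQ).2]
    exact Set.smul_mem_smul_set hb₀

lemma IsMinimalNormalIn.socle_eq_of_comm (hAH : IsMinimalNormalIn A H)
    (hA : IsTransitivePerm A) (hab : ∀ x ∈ A, ∀ y ∈ A, x * y = y * x) : socle H = A := by
  refine socle_eq_of_forall_eq hAH fun N hN => hN.eq_of_inf_ne_bot hAH fun hbot => hN.2.1 ?_
  have hNA : N ≤ A := fun n hn =>
    hA.mem_of_forall_mul_comm hab fun a ha => hN.1.mul_comm_of_inf_eq_bot hAH.1 hbot hn ha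
  rwa [inf_eq_left.2 hNA] at hbot

end Perm

variable {Ω : Type*} {P : Set (Set Ω)} {E : Set (Set (Set Ω))} {G M : Subgroup (Equiv.Perm Ω)}

section Partition

lemma IsPartition.nonempty_of_mem (hP : IsPartition P) {b : Set Ω} (hb : b ∈ P) : b.Nonempty :=
  Set.nonempty_iff_ne_empty.2 fun h => hP.1 (h ▸ hb)

lemma IsPartition.eq_of_mem (hP : IsPartition P) {b b' : Set Ω} (hb : b ∈ P) (hb' : b' ∈ P)
    {ω : Ω} (hω : ω ∈ b) (hω' : ω ∈ b') : b = b' :=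
  (hP.2 ω).unique ⟨hb, hω⟩ ⟨hb', hω'⟩

lemma IsProperPartition.nontrivial (hP : IsProperPartition P) : Nontrivial ↥P := by
  by_contra h
  rw [not_nontrivial_iff_subsingleton] at h
  obtain ⟨b, hb, -⟩ : ∃ b ∈ P, ¬ ∃ ω, b = {ω} := by simpa using hP.2.2
  have hall : ∀ b' ∈ P, b' = b := fun b' hb' =>
    congrArg Subtype.val (Subsingleton.elim (⟨b', hb'⟩ : ↥P) ⟨b, hb⟩)
  have hb_univ : b = Set.univ := Set.eq_univ_of_forall fun ω => by
    obtain ⟨c, ⟨hc, hωc⟩, -⟩ := hP.1.2 ω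
    rwa [hall c hc] at hωc
  exact hP.2.1 (Set.eq_singleton_iff_unique_mem.2 ⟨hb_univ ▸ hb, fun b' hb' => hb_univ ▸ hall b' hb'⟩)

lemma conj_mem_partKernel_smul {g x : Equiv.Perm Ω} (hx : x ∈ partKernel P) :
    g * x * g⁻¹ ∈ partKernel (g • P) := by
  rintro _ ⟨b, hb, rfl⟩
  simp only [mul_smul, inv_smul_smul, hx b hb]

end Partition

section Component

lemma mem_component_iff {x : Equiv.Perm ↥P} :
    x ∈ component G P ↔ ∃ (g : Equiv.Perm Ω) (hg : g ∈ partStab P),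
      g ∈ G ∧ componentHom P ⟨g, hg⟩ = x := by
  constructor
  · rintro ⟨s, hs, rfl⟩
    exact ⟨s, s.2, hs, rfl⟩
  · rintro ⟨g, hg, hgG, rfl⟩
    exact ⟨⟨g, hg⟩, hgG, rfl⟩

lemma componentHom_eq_one_iff (g : ↥(partStab P)) :
    componentHom P g = 1 ↔ (g : Equiv.Perm Ω) ∈ partKernel P :=
  ⟨fun h b hb => congrArg Subtype.val (Equiv.congr_fun h ⟨b, hb⟩),
    fun h => Equiv.ext fun b => Subtype.ext (h b b.2)⟩

lemma component_mono_s18 (h : M ≤ G) : component M P ≤ component G P :=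
  Subgroup.map_mono fun _ hg => h hg

lemma IsNormalIn.component (hMG : IsNormalIn M G) : IsNormalIn (component M P) (component G P) := by
  refine ⟨component_mono_s18 hMG.1, ?_⟩
  rintro _ ⟨g, hg, rfl⟩ _ ⟨m, hm, rfl⟩
  rw [← map_inv, ← map_mul, ← map_mul]
  exact ⟨_, hMG.2 _ hg _ hm, rfl⟩

lemma component_mul_comm (hMab : ∀ x ∈ M, ∀ y ∈ M, x * y = y * x) :
    ∀ x ∈ component M P, ∀ y ∈ component M P, x * y = y * x := by
  rintro _ ⟨g, hg, rfl⟩ _ ⟨h, hh, rfl⟩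
  have hgh : g * h = h * g := Subtype.ext (hMab _ hg _ hh)
  rw [← map_mul, ← map_mul, hgh]

lemma component_pow_eq_one {p : ℕ} (hM : ∀ x ∈ M, x ^ p = 1) :
    ∀ x ∈ component M P, x ^ p = 1 := by
  rintro _ ⟨g, hg, rfl⟩
  have hgp : g ^ p = 1 := Subtype.ext (hM _ hg)
  rw [← map_pow, hgp, map_one]

lemma IsTransitivePerm.component (hM : IsTransitivePerm M) (hMP : M ≤ partStab P)
    (hP : IsPartition P) : IsTransitivePerm (component M P) := by
  rintro ⟨b, hb⟩ ⟨b', hb'⟩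
  obtain ⟨ω, hω⟩ := hP.nonempty_of_mem hb
  obtain ⟨ω', hω'⟩ := hP.nonempty_of_mem hb'
  obtain ⟨g, hgM, rfl⟩ := hM ω ω'
  refine ⟨componentHom P ⟨g, hMP hgM⟩, mem_component_iff.2 ⟨g, _, hgM, rfl⟩, Subtype.ext ?_⟩
  exact hP.eq_of_mem (componentHom P ⟨g, hMP hgM⟩ ⟨b, hb⟩).2 hb' (Set.smul_mem_smul_set hω) hω'

noncomputable def componentPreimage (P : Set (Set Ω)) (K : Subgroup (Equiv.Perm ↥P)) :
    Subgroup (Equiv.Perm Ω) :=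
  (K.comap (componentHom P)).map (partStab P).subtype

lemma mem_componentPreimage {K : Subgroup (Equiv.Perm ↥P)} {g : Equiv.Perm Ω} :
    g ∈ componentPreimage P K ↔ ∃ hg : g ∈ partStab P, componentHom P ⟨g, hg⟩ ∈ K := by
  constructor
  · rintro ⟨s, hs, rfl⟩
    exact ⟨s.2, hs⟩
  · rintro ⟨hg, hK⟩
    exact ⟨⟨g, hg⟩, hK, rfl⟩

end Component

section NormalDecomp

def otherPartsKernel (E : Set (Set (Set Ω))) (P : Set (Set Ω)) : Subgroup (Equiv.Perm Ω) :=
  ⨅ Q ∈ E \ {P}, partKernel Q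

lemma mem_otherPartsKernel {g : Equiv.Perm Ω} :
    g ∈ otherPartsKernel E P ↔ ∀ Q ∈ E, Q ≠ P → g ∈ partKernel Q := by
  simp [otherPartsKernel, Subgroup.mem_iInf]

lemma IsNormalDecompSet.le_partStab (hM : IsNormalDecompSet M E) (hP : P ∈ E) :
    M ≤ partStab P :=
  fun g hg => hM.1 g hg P hP

lemma IsNormalDecompSet.le_sup_otherPartsKernel (hM : IsNormalDecompSet M E) (hP : P ∈ E) :
    M ≤ M ⊓ otherPartsKernel E P ⊔ M ⊓ partKernel P := by
  obtain ⟨-, N, hNM, -, hNsup, -, hNker⟩ := hM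
  have hker : ∀ Q ∈ E, ∀ R ∈ E, R ≠ Q → N R ≤ M ⊓ partKernel Q := fun Q hQ R hR hRQ =>
    (hNker Q hQ).symm ▸ le_iSup₂_of_le (f := fun R (_ : R ∈ E \ {Q}) => N R) R ⟨hR, hRQ⟩ le_rfl
  calc M = ⨆ Q ∈ E, N Q := hNsup.symm
    _ ≤ _ := iSup₂_le fun Q hQ => by
      rcases eq_or_ne Q P with rfl | hQP
      · refine le_sup_of_le_left (le_inf (hNM Q hQ) (le_iInf₂ fun R hR => ?_))
        exact (hker R hR.1 Q hQ fun h => hR.2 h.symm).trans inf_le_right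
      · exact le_sup_of_le_right (hker P hP Q hQ hQP)

lemma conj_mem_partKernel_of_smul_ne (hinv : InvariantDec G E) (hP : P ∈ E)
    {g t : Equiv.Perm Ω} (hg : g ∈ G) (hgP : g • P ≠ P) (ht : t ∈ otherPartsKernel E P) :
    g * t * g⁻¹ ∈ partKernel P := by
  have hker := conj_mem_partKernel_smul (g := g) <| mem_otherPartsKernel.1 ht (g⁻¹ • P)
    (hinv _ (inv_mem hg) P hP) fun h => hgP ((smul_eq_iff_eq_inv_smul g).2 h.symm)
  rwa [smul_inv_smul] at hker

lemma exists_mem_otherPartsKernel_componentHom_eq (hMab : ∀ x ∈ M, ∀ y ∈ M, x * y = y * x)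
    (hMP : M ≤ partStab P) (hsplit : M ≤ M ⊓ otherPartsKernel E P ⊔ M ⊓ partKernel P)
    {x : Equiv.Perm ↥P} (hx : x ∈ component M P) :
    ∃ a ∈ M ⊓ otherPartsKernel E P, ∃ ha : a ∈ partStab P, componentHom P ⟨a, ha⟩ = x := by
  obtain ⟨m, hm, hmM, rfl⟩ := mem_component_iff.1 hx
  obtain ⟨a, ha, w, hw, rfl⟩ :=
    exists_mul_eq_of_mem_sup hMab inf_le_left inf_le_left (hsplit hmM)
  refine ⟨a, ha, hMP ha.1, ?_⟩
  have hsplit_aw : (⟨a * w, hm⟩ : ↥(partStab P)) = ⟨a, hMP ha.1⟩ * ⟨w, hMP hw.1⟩ := rfl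
  rw [hsplit_aw, map_mul, (componentHom_eq_one_iff ⟨w, hMP hw.1⟩).2 (Subgroup.mem_inf.1 hw).2, mul_one]

lemma IsMinimalNormalIn.isMinimalNormalIn_component (hM : IsMinimalNormalIn M G)
    (hMab : ∀ x ∈ M, ∀ y ∈ M, x * y = y * x) (hinv : InvariantDec G E) (hP : P ∈ E)
    (hMP : M ≤ partStab P) (hsplit : M ≤ M ⊓ otherPartsKernel E P ⊔ M ⊓ partKernel P)
    (hne : component M P ≠ ⊥) : IsMinimalNormalIn (component M P) (component G P) := by
  refine ⟨hM.1.component, hne, fun K hK hKne hKM => le_antisymm hKM ?_⟩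
  obtain ⟨k, hk, hk1⟩ := (Subgroup.bot_or_exists_ne_one K).resolve_left hKne
  obtain ⟨t, ht, htP, rfl⟩ := exists_mem_otherPartsKernel_componentHom_eq hMab hMP hsplit (hKM hk)
  have hconj : ∀ g ∈ G, g * t * g⁻¹ ∈ componentPreimage P K := by
    intro g hg
    refine mem_componentPreimage.2 ⟨hMP (hM.1.2 g hg t ht.1), ?_⟩
    by_cases hgP : g • P = P
    · have hgK := hK.2 _ (mem_component_iff.2 ⟨g, hgP, hg, rfl⟩) _ hk
      rwa [← map_inv, ← map_mul, ← map_mul] at hgK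
    · rw [(componentHom_eq_one_iff _).2 (conj_mem_partKernel_of_smul_ne hinv hP hg hgP ht.2)]
      exact K.one_mem
  have ht1 : t ≠ 1 := by
    rintro rfl
    exact hk1 ((componentHom_eq_one_iff _).2 (one_mem _))
  have hMK := hM.le_of_forall_conj_mem ht.1 ht1 hconj
  rintro _ ⟨⟨m, hmP⟩, hm, rfl⟩
  exact (mem_componentPreimage.1 (hMK hm)).2

end NormalDecomp

end QP

theorem HA_normal_decomposition_is_blowup_general
    {Ω : Type*} [Finite Ω]
    (G M : Subgroup (Equiv.Perm Ω)) (E : Set (Set (Set Ω)))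
    (hG : QP.IsQuasiprimitivePerm G)
    (hM : QP.IsMinimalNormalIn M G)
    (hMab : ∀ x ∈ M, ∀ y ∈ M, x * y = y * x)
    (hcart : QP.IsCartesianDecompSet E)
    (hinv : QP.InvariantDec G E)
    (htransE : QP.TransitiveOnDec G E)
    (hMdec : QP.IsNormalDecompSet M E) :
    (∀ P ∈ E,
      QP.IsRegularPerm (QP.component M P) ∧
      (∀ x ∈ QP.component M P, ∀ y ∈ QP.component M P, x * y = y * x) ∧
      (∃ p : ℕ, p.Prime ∧ ∀ x ∈ QP.component M P, x ^ p = 1) ∧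
      QP.IsMinimalNormalIn (QP.component M P) (QP.component G P) ∧
      QP.IsPrimitivePerm (QP.component G P) ∧
      QP.socle (QP.component G P) = QP.component M P) ∧
    QP.IsBlowUpDecomp G E := by
  have htM : QP.IsTransitivePerm M := hG.2 M hM.1 hM.2.1
  obtain ⟨p, hp, hexp⟩ := hM.exists_prime_exponent hMab
  have hcomp : ∀ P ∈ E,
      QP.IsRegularPerm (QP.component M P) ∧
      (∀ x ∈ QP.component M P, ∀ y ∈ QP.component M P, x * y = y * x) ∧
      (∃ p : ℕ, p.Prime ∧ ∀ x ∈ QP.component M P, x ^ p = 1) ∧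
      QP.IsMinimalNormalIn (QP.component M P) (QP.component G P) ∧
      QP.IsPrimitivePerm (QP.component G P) ∧
      QP.socle (QP.component G P) = QP.component M P := by
    intro P hP
    have hMP := hMdec.le_partStab hP
    have htMP := htM.component hMP (hcart.2.1 P hP).1
    have hab := QP.component_mul_comm (P := P) hMab
    have := (hcart.2.1 P hP).nontrivial
    have hmin := hM.isMinimalNormalIn_component hMab hinv hP hMP
      (hMdec.le_sup_otherPartsKernel hP) htMP.ne_bot
    exact ⟨htMP.isRegularPerm_of_comm hab, hab, ⟨p, hp, QP.component_pow_eq_one hexp⟩, hmin,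
      hmin.isPrimitivePerm_of_comm htMP hab, hmin.socle_eq_of_comm htMP hab⟩
  exact ⟨hcomp, hcart, hinv, htransE, M, hM.1, htM, hMdec, fun P hP => (hcomp P hP).2.2.2.2.2.symm⟩

/-- Let G be quasiprimitive with unique minimal normal subgroup
M = Soc G abelian (type HA), and let E be a transitive G-invariant M-normal Cartesian
decomposition.  Then for each Γ ∈ E the component M^Γ is a regular elementary abelian
minimal normal subgroup of G^Γ, the component G^Γ is primitive with Soc(G^Γ) = M^Γ,
and E is a blow-up decomposition. -/
theorem HA_normal_decomposition_is_blowup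
    {Ω : Type*} [Finite Ω]
    (G M : Subgroup (Equiv.Perm Ω)) (E : Set (Set (Set Ω)))
    (hG : QP.IsQuasiprimitivePerm G)
    (hM : QP.IsMinimalNormalIn M G)
    (hMsocle : M = QP.socle G)
    (hMuniq : ∀ K : Subgroup (Equiv.Perm Ω), QP.IsMinimalNormalIn K G → K = M)
    (hMab : ∀ x ∈ M, ∀ y ∈ M, x * y = y * x)
    (hcart : QP.IsCartesianDecompSet E)
    (hinv : QP.InvariantDec G E)
    (htransE : QP.TransitiveOnDec G E)
    (hMdec : QP.IsNormalDecompSet M E) :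
    (∀ P ∈ E,
      QP.IsRegularPerm (QP.component M P) ∧
      (∀ x ∈ QP.component M P, ∀ y ∈ QP.component M P, x * y = y * x) ∧
      (∃ p : ℕ, p.Prime ∧ ∀ x ∈ QP.component M P, x ^ p = 1) ∧
      QP.IsMinimalNormalIn (QP.component M P) (QP.component G P) ∧
      QP.IsPrimitivePerm (QP.component G P) ∧
      QP.socle (QP.component G P) = QP.component M P) ∧
    QP.IsBlowUpDecomp G E :=
  HA_normal_decomposition_is_blowup_general G M E hG hM hMab hcart hinv htransE hMdec
end
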